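/- arXiv:1111.3388 — 5 statements merged into one kernel-verified Lean document; each statement's English description precedes it below -/
import Mathlib

section
/- Let α>0 with α≠1, s<0, t>0, set D = A_{α,s,t}, and suppose a = (a₁,a₂) ∈ D and f_k = (u_k,v_k): Δ → D is a sequence of harmonic maps with f_k(0) → a and ‖df_k(0)‖ → ∞ as k → ∞. Then for every c ∈ ℝ: (i) there exists K ∈ ℕ such that c ∈ u_k(Δ) for all k ≥ K; and (ii) for every ε>0 there exists K ∈ ℕ such that for all k ≥ K there is a point z ∈ Δ with |z| < ε and u_k(z) = c. -/
open Complex Metric Set Filter Topology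

/-- The base domain `A_{α,s,t}`: `x₂ > t·x₁^α` for `x₁ > 0`, `x₂ > 0` for `x₁ = 0`,
and `x₂ > s·(-x₁)^α` for `x₁ < 0`. -/
def setA (α s t : ℝ) : Set (ℝ × ℝ) :=
  {x | (0 < x.1 → t * x.1 ^ α < x.2) ∧ (x.1 = 0 → 0 < x.2) ∧
       (x.1 < 0 → s * (-x.1) ^ α < x.2)}

/-- The Laplacian of `u : ℂ → ℝ`, as the sum of the second directional derivatives
in the directions `1` and `I`. -/
noncomputable def laplacian (u : ℂ → ℝ) (z : ℂ) : ℝ :=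
  fderiv ℝ (fun w => fderiv ℝ u w 1) z 1 +
    fderiv ℝ (fun w => fderiv ℝ u w Complex.I) z Complex.I

/-- A real-valued function is harmonic on a set if it is `C²` there and its
Laplacian vanishes there. -/
def HarmonicOn (u : ℂ → ℝ) (s : Set ℂ) : Prop :=
  ContDiffOn ℝ 2 u s ∧ ∀ z ∈ s, laplacian u z = 0

/-- A map `f = (u, v) : ℂ → ℝ²` is a harmonic map on a set if both components
are harmonic there. -/
def HarmonicMapOn (f : ℂ → ℝ × ℝ) (s : Set ℂ) : Prop :=
  HarmonicOn (fun z => (f z).1) s ∧ HarmonicOn (fun z => (f z).2) s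

/-!
If `u_k` omitted the value `c` on a disc `|z| < r`, then `u_k - c` would have constant sign there.
A holomorphic function with positive real part composed with the Möbius map onto the unit disc
satisfies the Schwarz lemma, which gives Harnack-type control of a positive harmonic function:
its gradient at the centre and its values on the half disc are bounded by its value at the centre.
Hence `‖du_k(0)‖` and a lower bound for `u_k` on `|z| < r/2` depend only on `|u_k(0)|` and `|c|`.
In `A_{α,s,t}` a lower bound `x₁ ≥ -B` forces `x₂ > s B^α`, so Harnack applied to `v_k` bounds
`‖dv_k(0)‖` as well. Since `f_k(0)` stays bounded, `‖df_k(0)‖` would stay bounded: contradiction.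
-/

open InnerProductSpace ComplexConjugate

theorem ContDiffAt.laplacian_eq_laplacian {u : ℂ → ℝ} {z : ℂ} (hu : ContDiffAt ℝ 2 u z) :
    laplacian u z = Laplacian.laplacian u z := by
  have hd : DifferentiableAt ℝ (fderiv ℝ u) z :=
    (hu.fderiv_right (m := 1) (by norm_num)).differentiableAt one_ne_zero
  have hsecond : ∀ v : ℂ, fderiv ℝ (fun w => fderiv ℝ u w v) z v = fderiv ℝ (fderiv ℝ u) z v v := by
    intro v
    rw [fderiv_clm_apply hd (differentiableAt_const v)]
    simp
  simp [laplacian, hsecond, laplacian_eq_iteratedFDeriv_complexPlane, iteratedFDeriv_two_apply]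

theorem HarmonicOn.harmonicOnNhd {u : ℂ → ℝ} {s : Set ℂ} (hs : IsOpen s) (hu : HarmonicOn u s) :
    HarmonicOnNhd u s := by
  intro z hz
  have hC : ∀ w ∈ s, ContDiffAt ℝ 2 u w := fun w hw => hu.1.contDiffAt (hs.mem_nhds hw)
  refine ⟨hC z hz, ?_⟩
  filter_upwards [hs.mem_nhds hz] with w hw
  rw [← (hC w hw).laplacian_eq_laplacian, hu.2 w hw, Pi.zero_apply]

/-- The Möbius map of the right half-plane onto the unit disc sending `w` to `0`. -/
noncomputable def cayley (w ζ : ℂ) : ℂ := (ζ - w) / (ζ + conj w)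

theorem cayley_self (w : ℂ) : cayley w w = 0 := by simp [cayley]

theorem add_conj_ne_zero {w ζ : ℂ} (hw : 0 < w.re) (hζ : 0 < ζ.re) : ζ + conj w ≠ 0 := by
  intro h
  have := congrArg Complex.re h
  simp only [Complex.add_re, Complex.conj_re, Complex.zero_re] at this
  linarith

theorem norm_cayley_lt_one {w ζ : ℂ} (hw : 0 < w.re) (hζ : 0 < ζ.re) : ‖cayley w ζ‖ < 1 := by
  have hne := add_conj_ne_zero hw hζ
  rw [cayley, norm_div, div_lt_one (norm_pos_iff.2 hne),
    ← sq_lt_sq₀ (norm_nonneg _) (norm_nonneg _), Complex.sq_norm, Complex.sq_norm]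
  simp only [Complex.normSq_apply, Complex.sub_re, Complex.sub_im, Complex.add_re, Complex.add_im,
    Complex.conj_re, Complex.conj_im]
  nlinarith [mul_pos hw hζ]

theorem re_le_three_mul_re_of_norm_cayley_le {w ζ : ℂ} (hw : 0 < w.re) (hζ : 0 < ζ.re)
    (h : ‖cayley w ζ‖ ≤ 1 / 2) : ζ.re ≤ 3 * w.re := by
  have hne := add_conj_ne_zero hw hζ
  rw [cayley, norm_div, div_le_iff₀ (norm_pos_iff.2 hne)] at h
  have h2 : ‖ζ - w‖ ^ 2 ≤ (1 / 2 * ‖ζ + conj w‖) ^ 2 := pow_le_pow_left₀ (norm_nonneg _) h 2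
  rw [mul_pow, Complex.sq_norm, Complex.sq_norm] at h2
  simp only [Complex.normSq_apply, Complex.sub_re, Complex.sub_im, Complex.add_re, Complex.add_im,
    Complex.conj_re, Complex.conj_im] at h2
  nlinarith

theorem hasDerivAt_cayley_self {w : ℂ} (hw : 0 < w.re) :
    HasDerivAt (cayley w) (1 / (2 * w.re)) w := by
  have hne := add_conj_ne_zero hw hw
  have h := ((hasDerivAt_id' w).sub_const w).fun_div ((hasDerivAt_id' w).add_const (conj w)) hne
  rw [sub_self, zero_mul, sub_zero, one_mul, Complex.add_conj, sq, div_mul_cancel_left₀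
    (by rwa [Complex.add_conj] at hne)] at h
  exact h.congr_deriv (by push_cast; ring)

section PositiveRealPart

variable {G : ℂ → ℂ} {c : ℂ} {r : ℝ}

theorem DifferentiableOn.cayley_comp (hG : DifferentiableOn ℂ G (ball c r))
    (hpos : ∀ z ∈ ball c r, 0 < (G z).re) :
    DifferentiableOn ℂ (cayley (G c) ∘ G) (ball c r) :=
  (hG.sub_const _).div (hG.add_const _) fun z hz =>
    add_conj_ne_zero (hpos c (mem_ball_self (pos_of_mem_ball hz))) (hpos z hz)

theorem mapsTo_cayley_comp (hr : 0 < r) (hpos : ∀ z ∈ ball c r, 0 < (G z).re) :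
    MapsTo (cayley (G c) ∘ G) (ball c r) (closedBall ((cayley (G c) ∘ G) c) 1) := by
  intro z hz
  rw [Function.comp_apply, cayley_self, mem_closedBall_zero_iff]
  exact (norm_cayley_lt_one (hpos c (mem_ball_self hr)) (hpos z hz)).le

theorem norm_deriv_le_of_re_pos (hr : 0 < r) (hG : DifferentiableOn ℂ G (ball c r))
    (hpos : ∀ z ∈ ball c r, 0 < (G z).re) :
    ‖deriv G c‖ ≤ 2 * (G c).re / r := by
  have hc : 0 < (G c).re := hpos c (mem_ball_self hr)
  have hschwarz := Complex.norm_deriv_le_div_of_mapsTo_ball (hG.cayley_comp hpos)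
    (mapsTo_cayley_comp hr hpos) hr
  have hGd : HasDerivAt G (deriv G c) c :=
    (hG.differentiableAt (isOpen_ball.mem_nhds (mem_ball_self hr))).hasDerivAt
  rw [((hasDerivAt_cayley_self hc).comp c hGd).deriv, norm_mul, norm_div, norm_one,
    norm_mul, Complex.norm_ofNat, Complex.norm_real, Real.norm_of_nonneg hc.le] at hschwarz
  calc ‖deriv G c‖ = 2 * (G c).re * (1 / (2 * (G c).re) * ‖deriv G c‖) := by field_simp
    _ ≤ 2 * (G c).re * (1 / r) := by gcongr
    _ = 2 * (G c).re / r := by ring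

theorem re_le_three_mul_of_re_pos (hr : 0 < r) (hG : DifferentiableOn ℂ G (ball c r))
    (hpos : ∀ z ∈ ball c r, 0 < (G z).re) {z : ℂ} (hz : dist z c ≤ r / 2) :
    (G z).re ≤ 3 * (G c).re := by
  have hzr : z ∈ ball c r := mem_ball.2 (by linarith)
  have hschwarz := Complex.dist_le_div_mul_dist_of_mapsTo_ball (hG.cayley_comp hpos)
    (mapsTo_cayley_comp hr hpos) hzr
  refine re_le_three_mul_re_of_norm_cayley_le (hpos c (mem_ball_self hr)) (hpos z hzr) ?_
  rw [Function.comp_apply, Function.comp_apply, cayley_self, dist_zero_right] at hschwarz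
  calc ‖cayley (G c) (G z)‖ ≤ 1 / r * dist z c := hschwarz
    _ ≤ 1 / r * (r / 2) := by gcongr
    _ = 1 / 2 := by field_simp

end PositiveRealPart

theorem IsPreconnected.forall_lt_or_forall_gt {X α : Type*} [TopologicalSpace X] [LinearOrder α]
    [TopologicalSpace α] [OrderClosedTopology α] {S : Set X} {u : X → α} {b : α}
    (hS : IsPreconnected S) (hu : ContinuousOn u S) (hb : ∀ x ∈ S, u x ≠ b) :
    (∀ x ∈ S, b < u x) ∨ ∀ x ∈ S, u x < b := by
  by_contra! h
  obtain ⟨⟨x, hx, hxb⟩, ⟨y, hy, hyb⟩⟩ := h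
  obtain ⟨z, hz, hzb⟩ := hS.intermediate_value hx hy hu ⟨hxb, hyb⟩
  exact hb z hz hzb

theorem norm_fderiv_re_le {F : ℂ → ℂ} {z : ℂ} (hF : DifferentiableAt ℂ F z) :
    ‖fderiv ℝ (fun w => (F w).re) z‖ ≤ ‖deriv F z‖ := by
  have h : fderiv ℝ (fun w => (F w).re) z = Complex.reCLM.comp ((fderiv ℂ F z).restrictScalars ℝ) :=
    (Complex.reCLM.hasFDerivAt.comp z (hF.hasFDerivAt.restrictScalars ℝ)).fderiv
  rw [h, norm_deriv_eq_norm_fderiv]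
  calc ‖Complex.reCLM.comp ((fderiv ℂ F z).restrictScalars ℝ)‖
      ≤ ‖Complex.reCLM‖ * ‖(fderiv ℂ F z).restrictScalars ℝ‖ :=
        ContinuousLinearMap.opNorm_comp_le _ _
    _ = ‖fderiv ℂ F z‖ := by
        rw [Complex.reCLM_norm, one_mul, ContinuousLinearMap.norm_restrictScalars]

namespace InnerProductSpace.HarmonicOnNhd

variable {u : ℂ → ℝ} {c : ℂ} {r m b : ℝ}

theorem exists_differentiableOn_re_eq_sub (hu : HarmonicOnNhd u (ball c r)) (m : ℝ) :
    ∃ G : ℂ → ℂ, DifferentiableOn ℂ G (ball c r) ∧ ∀ z ∈ ball c r, (G z).re = u z - m := by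
  obtain ⟨F, hF, hFu⟩ := hu.exists_analyticOnNhd_ball_re_eq
  refine ⟨fun z => F z - m, hF.differentiableOn.sub_const _, fun z hz => ?_⟩
  simp [← hFu hz]

theorem norm_fderiv_le_of_lt (hr : 0 < r) (hu : HarmonicOnNhd u (ball c r))
    (hm : ∀ z ∈ ball c r, m < u z) : ‖fderiv ℝ u c‖ ≤ 2 * (u c - m) / r := by
  obtain ⟨G, hG, hGu⟩ := hu.exists_differentiableOn_re_eq_sub m
  have hcr : ball c r ∈ 𝓝 c := ball_mem_nhds c hr
  have hGu' : u =ᶠ[𝓝 c] fun z => (G z).re + m := by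
    filter_upwards [hcr] with z hz
    rw [hGu z hz, sub_add_cancel]
  rw [hGu'.fderiv_eq, fderiv_add_const, ← hGu c (mem_ball_self hr)]
  exact (norm_fderiv_re_le (hG.differentiableAt hcr)).trans
    (norm_deriv_le_of_re_pos hr hG fun z hz => by rw [hGu z hz]; linarith [hm z hz])

theorem sub_le_three_mul_of_lt (hr : 0 < r) (hu : HarmonicOnNhd u (ball c r))
    (hm : ∀ z ∈ ball c r, m < u z) {z : ℂ} (hz : dist z c ≤ r / 2) :
    u z - m ≤ 3 * (u c - m) := by
  obtain ⟨G, hG, hGu⟩ := hu.exists_differentiableOn_re_eq_sub m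
  rw [← hGu z (mem_ball.2 (by linarith)), ← hGu c (mem_ball_self hr)]
  exact re_le_three_mul_of_re_pos hr hG (fun w hw => by rw [hGu w hw]; linarith [hm w hw]) hz

theorem norm_fderiv_le_of_forall_ne (hr : 0 < r) (hu : HarmonicOnNhd u (ball c r))
    (hb : ∀ z ∈ ball c r, u z ≠ b) : ‖fderiv ℝ u c‖ ≤ 2 * (|u c| + |b|) / r := by
  rcases (convex_ball c r).isPreconnected.forall_lt_or_forall_gt hu.continuousOn hb with hgt | hlt
  · refine (hu.norm_fderiv_le_of_lt hr hgt).trans ?_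
    gcongr
    linarith [le_abs_self (u c), neg_abs_le b]
  · have h := hu.neg.norm_fderiv_le_of_lt hr (m := -b) fun z hz => neg_lt_neg (hlt z hz)
    rw [fderiv_neg, norm_neg] at h
    refine h.trans ?_
    gcongr
    linarith [neg_abs_le (u c), le_abs_self b, show (-u) c = -u c from rfl]

theorem neg_le_of_forall_ne (hr : 0 < r) (hu : HarmonicOnNhd u (ball c r))
    (hb : ∀ z ∈ ball c r, u z ≠ b) {z : ℂ} (hz : z ∈ ball c (r / 2)) :
    -(3 * |u c| + 2 * |b|) ≤ u z := by
  rcases (convex_ball c r).isPreconnected.forall_lt_or_forall_gt hu.continuousOn hb with hgt | hlt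
  · linarith [hgt z (ball_subset_ball (half_le_self hr.le) hz), neg_abs_le b, abs_nonneg b,
      abs_nonneg (u c)]
  · have h := hu.neg.sub_le_three_mul_of_lt hr (m := -b) (fun w hw => neg_lt_neg (hlt w hw))
      (mem_ball.1 hz).le
    simp only [Pi.neg_apply] at h
    linarith [neg_abs_le (u c), le_abs_self b]

end InnerProductSpace.HarmonicOnNhd

theorem lt_snd_of_mem_setA {α s t B : ℝ} {x : ℝ × ℝ} (hα : 0 ≤ α) (hs : s ≤ 0) (ht : 0 ≤ t)
    (hx : x ∈ setA α s t) (hB : 0 ≤ B) (hxB : -B ≤ x.1) : s * B ^ α < x.2 := by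
  obtain ⟨hpos, hzero, hneg⟩ := hx
  have hsB : s * B ^ α ≤ 0 := mul_nonpos_of_nonpos_of_nonneg hs (Real.rpow_nonneg hB α)
  rcases lt_trichotomy x.1 0 with h | h | h
  · calc s * B ^ α ≤ s * (-x.1) ^ α :=
          mul_le_mul_of_nonpos_left (Real.rpow_le_rpow (by linarith) (by linarith) hα) hs
      _ < x.2 := hneg h
  · linarith [hzero h]
  · linarith [hpos h, mul_nonneg ht (Real.rpow_nonneg h.le α)]

theorem norm_fderiv_le_of_forall_fst_ne {α s t r R b : ℝ} {f : ℂ → ℝ × ℝ} {c : ℂ}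
    (hα : 0 ≤ α) (hs : s ≤ 0) (ht : 0 ≤ t) (hr : 0 < r)
    (hu : HarmonicOnNhd (fun z => (f z).1) (ball c r))
    (hv : HarmonicOnNhd (fun z => (f z).2) (ball c r)) (hmaps : MapsTo f (ball c r) (setA α s t))
    (hR : ‖f c‖ ≤ R) (hb : ∀ z ∈ ball c r, (f z).1 ≠ b) :
    ‖fderiv ℝ f c‖ ≤ 4 * (R + |b| - s * (3 * R + 2 * |b|) ^ α) / r := by
  set B := 3 * R + 2 * |b|
  have huc : |(f c).1| ≤ R := (norm_fst_le (f c)).trans hR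
  have hvc : |(f c).2| ≤ R := (norm_snd_le (f c)).trans hR
  have hB : 0 ≤ B := by positivity [(abs_nonneg _).trans huc]
  have hsB : s * B ^ α ≤ 0 := mul_nonpos_of_nonpos_of_nonneg hs (Real.rpow_nonneg hB α)
  have hhalf : ball c (r / 2) ⊆ ball c r := ball_subset_ball (half_le_self hr.le)
  have hdu := hu.norm_fderiv_le_of_forall_ne hr hb
  have hdv := (hv.mono hhalf).norm_fderiv_le_of_lt (half_pos hr) (m := s * B ^ α) fun z hz =>
    lt_snd_of_mem_setA hα hs ht (hmaps (hhalf hz)) hB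
      (by linarith [hu.neg_le_of_forall_ne hr hb hz])
  have hdiff : ∀ g : ℂ → ℝ, HarmonicOnNhd g (ball c r) → DifferentiableAt ℝ g c :=
    fun g hg => (hg c (mem_ball_self hr)).1.differentiableAt two_ne_zero
  rw [(hdiff _ hu).fderiv_prodMk (hdiff _ hv), ContinuousLinearMap.opNorm_prod, Prod.norm_def]
  refine max_le ?_ ?_
  · calc _ ≤ 2 * (|(f c).1| + |b|) / r := hdu
      _ ≤ _ := by gcongr <;> linarith [abs_nonneg b, abs_nonneg (f c).1]
  · calc _ ≤ 2 * ((f c).2 - s * B ^ α) / (r / 2) := hdv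
      _ = 4 * ((f c).2 - s * B ^ α) / r := by field_simp; ring
      _ ≤ _ := by gcongr; linarith [abs_nonneg b, le_abs_self (f c).2]

theorem levelSets_A_general (α s t : ℝ) (hα : 0 < α) (hs : s < 0) (ht : 0 < t)
    (a : ℝ × ℝ) (f : ℕ → ℂ → ℝ × ℝ)
    (hharm : ∀ k, HarmonicMapOn (f k) (ball (0 : ℂ) 1))
    (hmaps : ∀ k, MapsTo (f k) (ball (0 : ℂ) 1) (setA α s t))
    (hconv : Tendsto (fun k => f k 0) atTop (𝓝 a))
    (hblow : Tendsto (fun k => ‖fderiv ℝ (f k) 0‖) atTop atTop) :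
    ∀ c : ℝ,
      (∃ K : ℕ, ∀ k ≥ K, ∃ z ∈ ball (0 : ℂ) 1, (f k z).1 = c) ∧
      (∀ ε > (0 : ℝ), ∃ K : ℕ, ∀ k ≥ K,
        ∃ z ∈ ball (0 : ℂ) 1, ‖z‖ < ε ∧ (f k z).1 = c) := by
  intro c
  have hlevel : ∀ ε > (0 : ℝ), ∃ K : ℕ, ∀ k ≥ K, ∃ z ∈ ball (0 : ℂ) 1, ‖z‖ < ε ∧ (f k z).1 = c := by
    intro ε hε
    have hball : ball (0 : ℂ) (min ε 1) ⊆ ball 0 1 := ball_subset_ball (min_le_right _ _)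
    set R := ‖a‖ + 1
    obtain ⟨K, hK⟩ := eventually_atTop.1
      ((hconv.norm.eventually (gt_mem_nhds (lt_add_one ‖a‖))).and (hblow.eventually_gt_atTop
        (4 * (R + |c| - s * (3 * R + 2 * |c|) ^ α) / min ε 1)))
    refine ⟨K, fun k hk => ?_⟩
    by_contra! hne
    have hbound := norm_fderiv_le_of_forall_fst_ne hα.le hs.le ht.le (lt_min hε one_pos)
      (((hharm k).1.harmonicOnNhd isOpen_ball).mono hball)
      (((hharm k).2.harmonicOnNhd isOpen_ball).mono hball) ((hmaps k).mono_left hball)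
      (hK k hk).1.le fun z hz =>
        hne z (hball hz) ((mem_ball_zero_iff.1 hz).trans_le (min_le_left _ _))
    linarith [(hK k hk).2]
  obtain ⟨K, hK⟩ := hlevel 1 one_pos
  exact ⟨⟨K, fun k hk => (hK k hk).imp fun z ⟨hz, _, hzc⟩ => ⟨hz, hzc⟩⟩, hlevel⟩

/-- Level-set properties (Proposition 2.1 of the paper) for a degenerating sequence of
harmonic maps into `A_{α,s,t}`: (i) every value `c` is attained by the first component
`u_k` for all large `k`; (ii) the level set `{u_k = c}` approaches the origin. -/
theorem levelSets_A (α s t : ℝ) (hα : 0 < α) (hα1 : α ≠ 1) (hs : s < 0) (ht : 0 < t)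
    (a : ℝ × ℝ) (ha : a ∈ setA α s t) (f : ℕ → ℂ → ℝ × ℝ)
    (hharm : ∀ k, HarmonicMapOn (f k) (ball (0 : ℂ) 1))
    (hmaps : ∀ k, MapsTo (f k) (ball (0 : ℂ) 1) (setA α s t))
    (hconv : Tendsto (fun k => f k 0) atTop (𝓝 a))
    (hblow : Tendsto (fun k => ‖fderiv ℝ (f k) 0‖) atTop atTop) :
    ∀ c : ℝ,
      (∃ K : ℕ, ∀ k ≥ K, ∃ z ∈ ball (0 : ℂ) 1, (f k z).1 = c) ∧
      (∀ ε > (0 : ℝ), ∃ K : ℕ, ∀ k ≥ K,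
        ∃ z ∈ ball (0 : ℂ) 1, ‖z‖ < ε ∧ (f k z).1 = c) :=
  levelSets_A_general α s t hα hs ht a f hharm hmaps hconv hblow
end

section
/- Let α>0, t>0 and e^{−2πα}·t < s < t, set D = C_{α,s,t}, and suppose a = (a₁,a₂) ∈ D and f_k = (u_k,v_k): Δ → D is a sequence of harmonic maps with f_k(0) → a and ‖df_k(0)‖ → ∞ as k → ∞. Then for every c ∈ ℝ: (i) there exists K ∈ ℕ such that c ∈ u_k(Δ) for all k ≥ K; and (ii) for every ε>0 there exists K ∈ ℕ such that for all k ≥ K there is a point z ∈ Δ with |z| < ε and u_k(z) = c. -/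
/-!
Write a point of `C_{α,s,t}` as `r e^{iθ}` with `s e^{αθ} < r < t e^{αθ}`. Since
`e^{-2πα} t < s`, the admissible angles of a point lie in a window of length `< 2π`, so the angle
is unique and depends continuously on the point. A connected subset of `C_{α,s,t}` containing a
point near `a` and a point of large modulus therefore takes every angle between a bounded one and a
large one; so it meets the positive and the negative real axis far from the origin, hence every
vertical line `re = c`. Consequently, if `u_k ≠ c` on the disc of radius `ε`, then `f_k` maps that
disc into a bounded set, and the gradient estimate for bounded harmonic functions
(Borel–Carathéodory and Cauchy's estimate for the holomorphic function with real part `u_k`)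
bounds `‖df_k(0)‖` by a multiple of `1/ε`, contradicting `‖df_k(0)‖ → ∞`.
-/

open Complex Metric Set Filter Topology

/-- The base domain `C_{α,s,t}`: in polar coordinates, `s·e^{αφ} < r < t·e^{αφ}`. -/
def setC (α s t : ℝ) : Set (ℝ × ℝ) :=
  {x | ∃ r φ : ℝ, s * Real.exp (α * φ) < r ∧ r < t * Real.exp (α * φ) ∧
       x = (r * Real.cos φ, r * Real.sin φ)}

open scoped Real

section Harmonic

variable {u : ℂ → ℝ} {U : Set ℂ} {r M : ℝ}

lemma fderiv_fderiv_apply_const {z v w : ℂ} (hu : DifferentiableAt ℝ (fderiv ℝ u) z) :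
    fderiv ℝ (fun y => fderiv ℝ u y v) z w = fderiv ℝ (fderiv ℝ u) z w v := by
  rw [fderiv_clm_apply hu (differentiableAt_const v)]
  simp

lemma HarmonicOn.harmonicOnNhd_s8 (hu : HarmonicOn u U) (hU : IsOpen U) :
    InnerProductSpace.HarmonicOnNhd u U := by
  intro z hz
  refine ⟨hu.1.contDiffAt (hU.mem_nhds hz), ?_⟩
  filter_upwards [hU.mem_nhds hz] with w hw
  have hC1 : ContDiffOn ℝ 1 (fderiv ℝ u) U := hu.1.fderiv_of_isOpen hU (by norm_num)
  have hd : DifferentiableAt ℝ (fderiv ℝ u) w :=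
    (hC1.differentiableOn one_ne_zero).differentiableAt (hU.mem_nhds hw)
  have h := hu.2 w hw
  rw [laplacian, fderiv_fderiv_apply_const hd, fderiv_fderiv_apply_const hd] at h
  simpa [InnerProductSpace.laplacian_eq_iteratedFDeriv_complexPlane, iteratedFDeriv_two_apply]
    using h

lemma norm_fderiv_le_norm_deriv_of_eventuallyEq_re {F : ℂ → ℂ} {z : ℂ}
    (hF : DifferentiableAt ℂ F z) (hu : u =ᶠ[𝓝 z] fun w => (F w).re) :
    ‖fderiv ℝ u z‖ ≤ ‖deriv F z‖ := by
  have hder : HasFDerivAt u (reCLM.comp (deriv F z • (1 : ℂ →L[ℝ] ℂ))) z :=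
    (reCLM.hasFDerivAt.comp z hF.hasDerivAt.complexToReal_fderiv).congr_of_eventuallyEq hu
  rw [hder.fderiv]
  refine ContinuousLinearMap.opNorm_le_bound _ (norm_nonneg _) fun w => ?_
  simpa using abs_re_le_norm (deriv F z * w)

lemma norm_deriv_le_of_re_le {F : ℂ → ℂ} (hr : 0 < r) (hM : 0 < M)
    (hF : DifferentiableOn ℂ F (ball 0 r)) (hre : ∀ z ∈ ball 0 r, (F z).re ≤ (F 0).re + M) :
    ‖deriv F 0‖ ≤ 4 * M / r := by
  set G : ℂ → ℂ := fun z => F z - F 0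
  have hG : DifferentiableOn ℂ G (ball 0 r) := hF.sub_const _
  have hsphere : ∀ z ∈ sphere (0 : ℂ) (r / 2), ‖G z‖ ≤ 2 * M := by
    intro z hz
    have hz' : z ∈ ball (0 : ℂ) r := sphere_subset_ball (by linarith) hz
    have hGre : MapsTo G (ball 0 r) {w | w.re ≤ M} := fun w hw => by
      simp only [G, mem_ofPred_eq, sub_re]
      linarith [hre w hw]
    have hbc := borelCaratheodory_zero hM hG hGre hr hz' (sub_self _)
    rw [mem_sphere_zero_iff_norm.1 hz] at hbc
    convert hbc using 1
    field_simp
    ring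
  have hcauchy := norm_deriv_le_of_forall_mem_sphere_norm_le (by positivity)
    (hG.diffContOnCl_ball (closedBall_subset_ball (by linarith))) hsphere
  rw [deriv_sub_const] at hcauchy
  convert hcauchy using 1
  field_simp
  ring

lemma HarmonicOn.norm_fderiv_le (hr : 0 < r) (hM : 0 < M) (hu : HarmonicOn u (ball 0 r))
    (hbound : ∀ z ∈ ball 0 r, |u z| ≤ M) : ‖fderiv ℝ u 0‖ ≤ 8 * M / r := by
  obtain ⟨F, hF, hFu⟩ := (hu.harmonicOnNhd_s8 isOpen_ball).exists_analyticOnNhd_ball_re_eq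
  have h0 : (0 : ℂ) ∈ ball 0 r := mem_ball_self hr
  have hu_eq : u =ᶠ[𝓝 0] fun w => (F w).re :=
    Filter.eventuallyEq_of_mem (isOpen_ball.mem_nhds h0) fun w hw => (hFu hw).symm
  have hre : ∀ z ∈ ball 0 r, (F z).re ≤ (F 0).re + 2 * M := by
    intro z hz
    have hFz : (F z).re = u z := hFu hz
    have hF0 : (F 0).re = u 0 := hFu h0
    rw [hFz, hF0]
    linarith [abs_le.1 (hbound z hz), abs_le.1 (hbound 0 h0)]
  calc ‖fderiv ℝ u 0‖ ≤ ‖deriv F 0‖ :=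
        norm_fderiv_le_norm_deriv_of_eventuallyEq_re (hF 0 h0).differentiableAt hu_eq
    _ ≤ 4 * (2 * M) / r := norm_deriv_le_of_re_le hr (by positivity) hF.differentiableOn hre
    _ = 8 * M / r := by ring

lemma HarmonicOn.mono {V : Set ℂ} (hu : HarmonicOn u U) (hVU : V ⊆ U) : HarmonicOn u V :=
  ⟨hu.1.mono hVU, fun z hz => hu.2 z (hVU hz)⟩

lemma HarmonicMapOn.mono {f : ℂ → ℝ × ℝ} {V : Set ℂ} (hf : HarmonicMapOn f U) (hVU : V ⊆ U) :
    HarmonicMapOn f V :=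
  ⟨hf.1.mono hVU, hf.2.mono hVU⟩

lemma HarmonicMapOn.norm_fderiv_le {f : ℂ → ℝ × ℝ} (hr : 0 < r) (hM : 0 < M)
    (hf : HarmonicMapOn f (ball 0 r)) (hbound : ∀ z ∈ ball 0 r, ‖f z‖ ≤ M) :
    ‖fderiv ℝ f 0‖ ≤ 8 * M / r := by
  have hdiff : ∀ {v : ℂ → ℝ}, HarmonicOn v (ball 0 r) → DifferentiableAt ℝ v 0 := fun hv =>
    (hv.1.differentiableOn (by norm_num)).differentiableAt (isOpen_ball.mem_nhds (mem_ball_self hr))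
  have hpair := (hdiff hf.1).hasFDerivAt.prodMk (hdiff hf.2).hasFDerivAt
  rw [hpair.fderiv, ContinuousLinearMap.opNorm_prod, Prod.norm_def]
  exact max_le
    (hf.1.norm_fderiv_le hr hM fun z hz => (norm_fst_le (f z)).trans (hbound z hz))
    (hf.2.norm_fderiv_le hr hM fun z hz => (norm_snd_le (f z)).trans (hbound z hz))

end Harmonic

lemma eq_of_cexp_mul_I_eq {x y : ℝ} (h : cexp (x * I) = cexp (y * I)) (hxy : |x - y| < 2 * π) :
    x = y := by
  obtain ⟨n, hn⟩ := exp_eq_exp_iff_exists_int.1 h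
  have hn' : x = y + n * (2 * π) := by simpa using congrArg im hn
  have hn0 : n = 0 := by
    rw [hn', add_sub_cancel_left, abs_mul, abs_of_pos Real.two_pi_pos] at hxy
    have : |(n : ℝ)| < 1 := lt_of_mul_lt_mul_right (by linarith) Real.two_pi_pos.le
    exact Int.abs_lt_one_iff.1 (by exact_mod_cast this)
  simp [hn', hn0]

lemma cexp_arg_mul_I {w : ℂ} (hw : w ≠ 0) : cexp (arg w * I) = w / ‖w‖ :=
  eq_div_of_mul_eq (ofReal_ne_zero.2 (norm_ne_zero_iff.2 hw))
    (by rw [mul_comm]; exact norm_mul_exp_arg_mul_I w)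

section Spiral

variable {α s t θ φ : ℝ} {z w : ℂ}

def IsSpiralAngle (α s t : ℝ) (z : ℂ) (θ : ℝ) : Prop :=
  s * Real.exp (α * θ) < ‖z‖ ∧ ‖z‖ < t * Real.exp (α * θ) ∧ ‖z‖ * cexp (θ * I) = z

def spiral (α s t : ℝ) : Set ℂ := {z | ∃ θ, IsSpiralAngle α s t z θ}

noncomputable def spiralAngle (α s t : ℝ) (z : ℂ) : ℝ :=
  Classical.epsilon (IsSpiralAngle α s t z)

lemma isSpiralAngle_spiralAngle (hz : z ∈ spiral α s t) :
    IsSpiralAngle α s t z (spiralAngle α s t z) :=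
  Classical.epsilon_spec hz

namespace IsSpiralAngle

lemma norm_pos (hs : 0 < s) (h : IsSpiralAngle α s t z θ) : 0 < ‖z‖ :=
  lt_trans (by positivity) h.1

lemma log_add_mul_lt (hs : 0 < s) (h : IsSpiralAngle α s t z θ) :
    Real.log s + α * θ < Real.log ‖z‖ := by
  have := Real.log_lt_log (by positivity) h.1
  rwa [Real.log_mul hs.ne' (Real.exp_pos _).ne', Real.log_exp] at this

lemma log_lt_log_add_mul (hs : 0 < s) (h : IsSpiralAngle α s t z θ) :
    Real.log ‖z‖ < Real.log t + α * θ := by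
  have ht : 0 < t := pos_of_mul_pos_left ((h.norm_pos hs).trans h.2.1) (Real.exp_pos _).le
  have := Real.log_lt_log (h.norm_pos hs) h.2.1
  rwa [Real.log_mul ht.ne' (Real.exp_pos _).ne', Real.log_exp] at this

lemma cexp_mul_I (hs : 0 < s) (h : IsSpiralAngle α s t z θ) : cexp (θ * I) = z / ‖z‖ :=
  eq_div_of_mul_eq (ofReal_ne_zero.2 (h.norm_pos hs).ne') (by rw [mul_comm]; exact h.2.2)

lemma re_eq (h : IsSpiralAngle α s t z θ) : z.re = ‖z‖ * Real.cos θ := by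
  conv_lhs => rw [← h.2.2]
  simp [exp_ofReal_mul_I_re]

lemma mul_abs_sub_lt (hα : 0 < α) (hs : 0 < s) (h : IsSpiralAngle α s t z θ)
    (h' : IsSpiralAngle α s t w φ) :
    α * |θ - φ| < Real.log t - Real.log s + |Real.log ‖z‖ - Real.log ‖w‖| := by
  have key : |α * θ - α * φ| < Real.log t - Real.log s + |Real.log ‖z‖ - Real.log ‖w‖| := by
    rw [abs_sub_lt_iff]
    constructor <;> linarith [h.log_add_mul_lt hs, h.log_lt_log_add_mul hs, h'.log_add_mul_lt hs,
      h'.log_lt_log_add_mul hs, le_abs_self (Real.log ‖z‖ - Real.log ‖w‖),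
      neg_abs_le (Real.log ‖z‖ - Real.log ‖w‖)]
  rwa [← mul_sub, abs_mul, abs_of_pos hα] at key

end IsSpiralAngle

theorem continuousOn_spiralAngle (hα : 0 < α) (hs : 0 < s)
    (hwidth : Real.log t - Real.log s < 2 * π * α) :
    ContinuousOn (spiralAngle α s t) (spiral α s t) := by
  intro z₀ hz₀
  have h₀ := isSpiralAngle_spiralAngle hz₀
  have hz₀0 : z₀ ≠ 0 := norm_pos_iff.1 (h₀.norm_pos hs)
  -- near `z₀` the angle equals `θ₀ + arg (z / z₀)`: both are angles of `z` close to `θ₀`,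
  -- so they differ by a multiple of `2π` smaller than `2π`
  set ψ : ℂ → ℝ := fun z => spiralAngle α s t z₀ + arg (z / z₀)
  have harg : ContinuousAt (fun z => arg (z / z₀)) z₀ :=
    (continuousAt_arg (by simp [hz₀0, one_mem_slitPlane])).comp (continuousAt_id.div_const z₀)
  have hψ₀ : spiralAngle α s t z₀ = ψ z₀ := by simp [ψ, hz₀0]
  have hgap : ∀ᶠ z in 𝓝 z₀, |Real.log ‖z‖ - Real.log ‖z₀‖| + α * |arg (z / z₀)| <
      2 * π * α - (Real.log t - Real.log s) := by
    have hlog : ContinuousAt (fun z : ℂ => Real.log ‖z‖) z₀ :=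
      continuous_norm.continuousAt.log (norm_ne_zero_iff.2 hz₀0)
    refine ((hlog.sub continuousAt_const).abs.add (continuousAt_const.mul harg.abs)).eventually_lt
      continuousAt_const ?_
    simpa [hz₀0] using hwidth
  have heq : spiralAngle α s t =ᶠ[𝓝[spiral α s t] z₀] ψ := by
    filter_upwards [eventually_nhdsWithin_of_eventually_nhds hgap, self_mem_nhdsWithin]
      with z hz hzC
    have h := isSpiralAngle_spiralAngle hzC
    have hz0 : z ≠ 0 := norm_pos_iff.1 (h.norm_pos hs)
    refine eq_of_cexp_mul_I_eq ?_ (lt_of_mul_lt_mul_left ?_ hα.le)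
    · rw [h.cexp_mul_I hs, ofReal_add, add_mul, exp_add, h₀.cexp_mul_I hs,
        cexp_arg_mul_I (div_ne_zero hz0 hz₀0), norm_div]
      have : (‖z₀‖ : ℂ) ≠ 0 := ofReal_ne_zero.2 (norm_ne_zero_iff.2 hz₀0)
      have : (‖z‖ : ℂ) ≠ 0 := ofReal_ne_zero.2 (norm_ne_zero_iff.2 hz0)
      push_cast
      field_simp
    · calc α * |spiralAngle α s t z - ψ z|
          ≤ α * |spiralAngle α s t z - spiralAngle α s t z₀| + α * |arg (z / z₀)| := by
            rw [← mul_add]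
            gcongr
            exact (abs_sub_le _ (spiralAngle α s t z₀) _).trans_eq (by simp [ψ])
        _ < α * (2 * π) := by linarith [h.mul_abs_sub_lt hα hs h₀]
  exact (continuousAt_const.add harg).continuousWithinAt.congr_of_eventuallyEq heq hψ₀

theorem exists_re_eq_of_isPreconnected (hα : 0 < α) (hs : 0 < s) (ht : 0 < t)
    (hwidth : Real.log t - Real.log s < 2 * π * α) (R c : ℝ) :
    ∃ M, ∀ A ⊆ spiral α s t, IsPreconnected A → (∃ p ∈ A, ‖p‖ ≤ R) → (∃ q ∈ A, M < ‖q‖) →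
      ∃ z ∈ A, z.re = c := by
  set B := max ((Real.log R - Real.log s) / α) ((Real.log (|c| + 1) - Real.log s) / α)
  refine ⟨t * Real.exp (α * (B + 4 * π)), ?_⟩
  rintro A hA hconn ⟨p, hpA, hpR⟩ ⟨q, hqA, hqM⟩
  have hp := isSpiralAngle_spiralAngle (hA hpA)
  have hq := isSpiralAngle_spiralAngle (hA hqA)
  have hpB : spiralAngle α s t p < B := by
    have := Real.log_le_log (hp.norm_pos hs) hpR
    refine lt_of_lt_of_le ?_ (le_max_left _ _)
    rw [lt_div_iff₀ hα]
    linarith [hp.log_add_mul_lt hs]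
  have hqB : B + 4 * π < spiralAngle α s t q := by
    have := Real.log_lt_log (by positivity) hqM
    rw [Real.log_mul ht.ne' (Real.exp_pos _).ne', Real.log_exp] at this
    exact lt_of_mul_lt_mul_left (by linarith [hq.log_lt_log_add_mul hs]) hα.le
  have hattain : ∀ τ ∈ Icc B (B + 4 * π), ∃ x ∈ A, IsSpiralAngle α s t x τ ∧ |c| < ‖x‖ := by
    intro τ hτ
    obtain ⟨x, hxA, hxτ⟩ := hconn.intermediate_value hpA hqA
      ((continuousOn_spiralAngle hα hs hwidth).mono hA) ⟨hpB.le.trans hτ.1, hτ.2.trans hqB.le⟩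
    have hx := isSpiralAngle_spiralAngle (hA hxA)
    rw [hxτ] at hx
    have hcτ : Real.log (|c| + 1) - Real.log s ≤ α * τ := by
      rw [← div_le_iff₀' hα]
      exact (le_max_right _ _).trans hτ.1
    have := (Real.log_lt_log_iff (show (0 : ℝ) < |c| + 1 by positivity) (hx.norm_pos hs)).1
      (by linarith [hx.log_add_mul_lt hs])
    exact ⟨x, hxA, hx, by linarith⟩
  obtain ⟨n, hn₁, hn₂⟩ : ∃ n : ℤ, B ≤ n * (2 * π) ∧ n * (2 * π) ≤ B + 2 * π := by
    refine ⟨⌈B / (2 * π)⌉, ?_, ?_⟩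
    · rw [← div_le_iff₀ Real.two_pi_pos]
      exact Int.le_ceil _
    · have := Int.ceil_lt_add_one (B / (2 * π))
      rw [← le_div_iff₀ Real.two_pi_pos, add_div, div_self Real.two_pi_pos.ne']
      exact this.le
  obtain ⟨x₁, hx₁A, hx₁, hc₁⟩ := hattain (n * (2 * π)) ⟨hn₁, by linarith [Real.pi_pos]⟩
  obtain ⟨x₂, hx₂A, hx₂, hc₂⟩ := hattain (n * (2 * π) + π) ⟨by linarith [Real.pi_pos], by linarith⟩
  have hre₁ : x₁.re = ‖x₁‖ := by rw [hx₁.re_eq, Real.cos_int_mul_two_pi, mul_one]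
  have hre₂ : x₂.re = -‖x₂‖ := by rw [hx₂.re_eq, Real.cos_add_pi, Real.cos_int_mul_two_pi]; ring
  exact hconn.intermediate_value hx₂A hx₁A continuous_re.continuousOn
    ⟨by linarith [neg_abs_le c], by linarith [le_abs_self c]⟩

end Spiral

lemma mapsTo_equivRealProdCLM_symm_setC_spiral {α s t : ℝ} (hs : 0 ≤ s) :
    MapsTo equivRealProdCLM.symm (setC α s t) (spiral α s t) := by
  rintro _ ⟨r, φ, h1, h2, rfl⟩
  have hr : 0 < r := lt_of_le_of_lt (by positivity) h1
  have hz : equivRealProdCLM.symm (r * Real.cos φ, r * Real.sin φ) = r * cexp (φ * I) := by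
    simp [equivRealProdCLM_symm_apply, exp_mul_I]
    ring
  have hnorm : ‖(r : ℂ) * cexp (φ * I)‖ = r := by
    rw [norm_mul, norm_exp_ofReal_mul_I, norm_real, Real.norm_of_nonneg hr.le, mul_one]
  refine ⟨φ, ?_⟩
  rw [hz, IsSpiralAngle, hnorm]
  exact ⟨h1, h2, rfl⟩

lemma norm_le_norm_equivRealProdCLM_symm (x : ℝ × ℝ) : ‖x‖ ≤ ‖equivRealProdCLM.symm x‖ :=
  max_le (by simpa using abs_re_le_norm (equivRealProdCLM.symm x))
    (by simpa using abs_im_le_norm (equivRealProdCLM.symm x))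

theorem exists_norm_le_of_isPreconnected_setC {α s t : ℝ} (hα : 0 < α) (ht : 0 < t)
    (hst : Real.exp (-(2 * π * α)) * t < s) (a : ℝ × ℝ) (c : ℝ) :
    ∃ M > 0, ∀ A ⊆ setC α s t, IsPreconnected A → (∃ p ∈ A, dist p a ≤ 1) →
      (∀ x ∈ A, x.1 ≠ c) → ∀ x ∈ A, ‖x‖ ≤ M := by
  have hs : 0 < s := lt_trans (by positivity) hst
  have hwidth : Real.log t - Real.log s < 2 * π * α := by
    have := Real.log_lt_log (by positivity) hst
    rw [Real.log_mul (Real.exp_pos _).ne' ht.ne', Real.log_exp] at this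
    linarith
  set e : ℝ × ℝ →L[ℝ] ℂ := (equivRealProdCLM.symm : ℝ × ℝ →L[ℝ] ℂ)
  obtain ⟨M, hM⟩ := exists_re_eq_of_isPreconnected hα hs ht hwidth (‖e‖ * (‖a‖ + 1)) c
  refine ⟨max M 1, by positivity, ?_⟩
  rintro A hA hconn ⟨p, hpA, hpa⟩ hne x hxA
  by_contra! hx
  obtain ⟨_, ⟨y, hyA, rfl⟩, hy⟩ := hM (e '' A)
    (image_subset_iff.2 (hA.trans (mapsTo_equivRealProdCLM_symm_setC_spiral hs.le)))
    (hconn.image e e.continuous.continuousOn)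
    ⟨e p, mem_image_of_mem e hpA,
      (e.le_opNorm p).trans (by gcongr; exact norm_le_of_mem_closedBall (mem_closedBall.2 hpa))⟩
    ⟨e x, mem_image_of_mem e hxA,
      (le_max_left M 1).trans_lt (hx.trans_le (norm_le_norm_equivRealProdCLM_symm x))⟩
  exact hne y hyA (by simpa [e] using hy)

theorem levelSets_C_general (α s t : ℝ) (hα : 0 < α) (ht : 0 < t)
    (hst : Real.exp (-(2 * Real.pi * α)) * t < s)
    (a : ℝ × ℝ) (f : ℕ → ℂ → ℝ × ℝ)
    (hharm : ∀ k, HarmonicMapOn (f k) (ball (0 : ℂ) 1))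
    (hmaps : ∀ k, MapsTo (f k) (ball (0 : ℂ) 1) (setC α s t))
    (hconv : Tendsto (fun k => f k 0) atTop (𝓝 a))
    (hblow : Tendsto (fun k => ‖fderiv ℝ (f k) 0‖) atTop atTop) :
    ∀ c : ℝ,
      (∃ K : ℕ, ∀ k ≥ K, ∃ z ∈ ball (0 : ℂ) 1, (f k z).1 = c) ∧
      (∀ ε > (0 : ℝ), ∃ K : ℕ, ∀ k ≥ K,
        ∃ z ∈ ball (0 : ℂ) 1, ‖z‖ < ε ∧ (f k z).1 = c) := by
  intro c
  obtain ⟨M, hM, hbound⟩ := exists_norm_le_of_isPreconnected_setC hα ht hst a c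
  have key : ∀ ε > (0 : ℝ), ∃ K : ℕ, ∀ k ≥ K, ∃ z ∈ ball (0 : ℂ) 1, ‖z‖ < ε ∧ (f k z).1 = c := by
    intro ε hε
    set r := min ε 1
    have hr : 0 < r := lt_min hε one_pos
    have hsub : ball (0 : ℂ) r ⊆ ball 0 1 := ball_subset_ball (min_le_right _ _)
    refine eventually_atTop.1 ?_
    filter_upwards [hconv (closedBall_mem_nhds a one_pos), hblow.eventually_gt_atTop (8 * M / r)]
      with k hk0 hk
    by_contra! hne
    -- otherwise `f k` maps `ball 0 r` into a bounded piece of `setC α s t`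
    have hharm' := (hharm k).mono hsub
    refine hk.not_ge (hharm'.norm_fderiv_le hr hM fun z hz => hbound _
      (((hmaps k).mono_left hsub).image_subset) ((convex_ball 0 r).isPreconnected.image _
        (hharm'.1.1.continuousOn.prodMk hharm'.2.1.continuousOn))
      ⟨f k 0, mem_image_of_mem _ (mem_ball_self hr), hk0⟩ ?_ _ (mem_image_of_mem _ hz))
    rintro _ ⟨w, hw, rfl⟩ hwc
    exact hne w (hsub hw) ((mem_ball_zero_iff.1 hw).trans_le (min_le_left _ _)) hwc
  refine ⟨?_, key⟩
  obtain ⟨K, hK⟩ := key 1 one_pos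
  exact ⟨K, fun k hk => (hK k hk).imp fun z hz => ⟨hz.1, hz.2.2⟩⟩

/-- Level-set properties (Proposition 2.1 of the paper) for a degenerating sequence of
harmonic maps into `C_{α,s,t}`: (i) every value `c` is attained by the first component
`u_k` for all large `k`; (ii) the level set `{u_k = c}` approaches the origin. -/
theorem levelSets_C (α s t : ℝ) (hα : 0 < α) (ht : 0 < t)
    (hst : Real.exp (-(2 * Real.pi * α)) * t < s) (hst' : s < t)
    (a : ℝ × ℝ) (ha : a ∈ setC α s t) (f : ℕ → ℂ → ℝ × ℝ)
    (hharm : ∀ k, HarmonicMapOn (f k) (ball (0 : ℂ) 1))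
    (hmaps : ∀ k, MapsTo (f k) (ball (0 : ℂ) 1) (setC α s t))
    (hconv : Tendsto (fun k => f k 0) atTop (𝓝 a))
    (hblow : Tendsto (fun k => ‖fderiv ℝ (f k) 0‖) atTop atTop) :
    ∀ c : ℝ,
      (∃ K : ℕ, ∀ k ≥ K, ∃ z ∈ ball (0 : ℂ) 1, (f k z).1 = c) ∧
      (∀ ε > (0 : ℝ), ∃ K : ℕ, ∀ k ≥ K,
        ∃ z ∈ ball (0 : ℂ) 1, ‖z‖ < ε ∧ (f k z).1 = c) :=
  levelSets_C_general α s t hα ht hst a f hharm hmaps hconv hblow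
end

section
/- Let α>0 with α≠1, s<0, t>0, and let c ∈ ℝ. Set D₋ = A_{α,s,t} ∩ {x₁ < c} and D₊ = A_{α,s,t} ∩ {x₁ > c}. Then each of the tube domains T_{D₋} and T_{D₊} (when the base is nonempty) satisfies: for every point w there exist a neighborhood U of w and a constant M>0 such that every holomorphic map f: Δ → T_{D₋} (respectively T_{D₊}) with f(0) ∈ U satisfies ‖f'(0)‖ < M; i.e., T_{D₋} and T_{D₊} are Kobayashi-hyperbolic. -/
open Complex Metric Set Filter Topology

/-- The tube domain over a base `D ⊆ ℝ²`. -/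
def tube (D : Set (ℝ × ℝ)) : Set (ℂ × ℂ) := {z | (z.1.re, z.2.re) ∈ D}

/-- Kobayashi hyperbolicity of a domain `T ⊆ ℂ²`, stated as the local uniform bound on
derivatives at `0` of holomorphic maps from the unit disk into `T`. -/
def IsHyperbolic (T : Set (ℂ × ℂ)) : Prop :=
  ∀ w ∈ T, ∃ U ⊆ T, U ∈ 𝓝 w ∧ ∃ M > (0 : ℝ),
    ∀ f : ℂ → ℂ × ℂ, DifferentiableOn ℂ f (ball (0 : ℂ) 1) →
      MapsTo f (ball (0 : ℂ) 1) T → f 0 ∈ U → ‖fderiv ℂ f 0‖ < M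

/-!
On the tube over `A_{α,s,t} ∩ {x₁ > c}` one has `Re z₁ > c` and `Re z₂ > s |c|^α`, so each
coordinate of a holomorphic disk lies in a half-plane `{C < re}`, and the Schwarz lemma for
half-planes, `‖g' 0‖ ≤ 2 (Re g 0 - C)`, bounds both derivatives locally uniformly.
On the tube over `A_{α,s,t} ∩ {x₁ < c}` the first coordinate is handled the same way; the second is
not confined to a half-plane, but Harnack's inequality for `c - Re f₁` keeps `Re f₁` bounded below
on the disk of radius `1/2`, where the shape of `A_{α,s,t}` then bounds `Re f₂` from below.
-/

/-- The Möbius map `ζ ↦ (ζ - a) / (ζ + conj a - 2 * C)` of the half-plane `{C < re}` onto the unit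
disk, sending `a` to `0`. -/
noncomputable def halfPlaneCayley (C : ℝ) (a ζ : ℂ) : ℂ := (ζ - a) / (ζ - a + 2 * (a.re - C))

section HalfPlane

variable {g : ℂ → ℂ} {s : Set ℂ} {a ζ c z : ℂ} {C R : ℝ}

@[simp]
lemma halfPlaneCayley_self : halfPlaneCayley C a a = 0 := by
  simp [halfPlaneCayley]

lemma halfPlaneCayley_denom_ne_zero (ha : C < a.re) (hζ : C < ζ.re) :
    ζ - a + 2 * (a.re - C) ≠ 0 := fun h => by
  have := congrArg re h
  simp only [add_re, sub_re, mul_re, re_ofNat, ofReal_re, im_ofNat, zero_re] at this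
  linarith

lemma norm_halfPlaneCayley_lt_one (ha : C < a.re) (hζ : C < ζ.re) :
    ‖halfPlaneCayley C a ζ‖ < 1 := by
  rw [halfPlaneCayley, norm_div, div_lt_one (norm_pos_iff.2 (halfPlaneCayley_denom_ne_zero ha hζ)),
    ← sq_lt_sq₀ (norm_nonneg _) (norm_nonneg _), Complex.sq_norm, Complex.sq_norm, normSq_apply,
    normSq_apply]
  simp only [add_re, sub_re, mul_re, re_ofNat, ofReal_re, im_ofNat, ofReal_im, add_im, sub_im,
    mul_im]
  nlinarith

lemma DifferentiableOn.halfPlaneCayley_comp (hg : DifferentiableOn ℂ g s) (ha : C < a.re)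
    (hC : ∀ z ∈ s, C < (g z).re) : DifferentiableOn ℂ (fun z => halfPlaneCayley C a (g z)) s :=
  (hg.sub_const _).div ((hg.sub_const _).add_const _) fun z hz =>
    halfPlaneCayley_denom_ne_zero ha (hC z hz)

lemma mapsTo_halfPlaneCayley_comp (ha : C < a.re) (hC : ∀ z ∈ s, C < (g z).re) :
    MapsTo (fun z => halfPlaneCayley C a (g z)) s (closedBall 0 1) := fun z hz =>
  mem_closedBall_zero_iff.2 (norm_halfPlaneCayley_lt_one ha (hC z hz)).le

/-- Schwarz's lemma for maps into the half-plane `{C < re}`. -/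
lemma norm_sub_le_of_forall_lt_re (hg : DifferentiableOn ℂ g (ball c R))
    (hC : ∀ z ∈ ball c R, C < (g z).re) (hz : z ∈ ball c R) :
    R * ‖g z - g c‖ ≤ ‖z - c‖ * ‖g z - g c + 2 * ((g c).re - C)‖ := by
  have hc : C < (g c).re := hC c (mem_ball_self (pos_of_mem_ball hz))
  have hmaps := mapsTo_halfPlaneCayley_comp hc hC
  rw [← halfPlaneCayley_self (C := C) (a := g c)] at hmaps
  have := Complex.dist_le_div_mul_dist_of_mapsTo_ball (hg.halfPlaneCayley_comp hc hC) hmaps hz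
  rw [halfPlaneCayley_self, dist_zero_right, halfPlaneCayley, norm_div, dist_eq,
    div_le_iff₀ (norm_pos_iff.2 (halfPlaneCayley_denom_ne_zero hc (hC z hz)))] at this
  rwa [mul_assoc, one_div, le_inv_mul_iff₀ (pos_of_mem_ball hz)] at this

/-- Harnack's inequality for the positive harmonic function `re ∘ g - C`. -/
lemma re_sub_le_of_forall_lt_re (hg : DifferentiableOn ℂ g (ball c R))
    (hC : ∀ z ∈ ball c R, C < (g z).re) (hz : z ∈ ball c R) :
    (R - ‖z - c‖) * ((g z).re - C) ≤ (R + ‖z - c‖) * ((g c).re - C) := by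
  have hA : 0 < (g c).re - C := sub_pos.2 (hC c (mem_ball_self (pos_of_mem_ball hz)))
  have hρ : ‖z - c‖ < R := mem_ball_iff_norm.1 hz
  have hschwarz := norm_sub_le_of_forall_lt_re hg hC hz
  have htri : ‖g z - g c + 2 * ((g c).re - C)‖ ≤ ‖g z - g c‖ + 2 * ((g c).re - C) := by
    refine (norm_add_le _ _).trans_eq ?_
    rw [← ofReal_sub, norm_mul, norm_real, Real.norm_of_nonneg hA.le]
    norm_num
  have hre : (g z).re - C ≤ ‖g z - g c‖ + ((g c).re - C) := by
    have := re_le_norm (g z - g c)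
    rw [sub_re] at this
    linarith
  nlinarith [norm_nonneg (z - c), norm_nonneg (g z - g c)]

lemma norm_deriv_le_of_forall_lt_re (hg : DifferentiableOn ℂ g (ball c R))
    (hC : ∀ z ∈ ball c R, C < (g z).re) (hR : 0 < R) :
    R * ‖deriv g c‖ ≤ 2 * ((g c).re - C) := by
  have hc : C < (g c).re := hC c (mem_ball_self hR)
  have hA : 0 < (g c).re - C := sub_pos.2 hc
  have hmaps := mapsTo_halfPlaneCayley_comp hc hC
  rw [← halfPlaneCayley_self (C := C) (a := g c)] at hmaps
  have hgc : HasDerivAt g (deriv g c) c :=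
    (hg.differentiableAt (ball_mem_nhds c hR)).hasDerivAt
  have hA' : 2 * (((g c).re : ℂ) - C) ≠ 0 := by
    rw [← ofReal_sub]; exact_mod_cast (by positivity : 2 * ((g c).re - C) ≠ 0)
  have hderiv : HasDerivAt (fun z => halfPlaneCayley C (g c) (g z))
      (deriv g c / (2 * ((g c).re - C))) c := by
    have := (hgc.sub_const (g c)).div ((hgc.sub_const (g c)).add_const (2 * (((g c).re : ℂ) - C)))
      (halfPlaneCayley_denom_ne_zero hc hc)
    rwa [sub_self, zero_add, zero_mul, sub_zero, pow_two, mul_div_mul_right _ _ hA'] at this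
  have := Complex.norm_deriv_le_div_of_mapsTo_ball (hg.halfPlaneCayley_comp hc hC) hmaps hR
  rw [hderiv.deriv, norm_div, ← ofReal_sub, norm_mul, norm_real, Real.norm_of_nonneg hA.le,
    Complex.norm_two, div_le_div_iff₀ (by positivity) hR] at this
  linarith

end HalfPlane

lemma norm_fderiv_eq_max_norm_deriv {𝕜 E F : Type*} [NontriviallyNormedField 𝕜]
    [NormedAddCommGroup E] [NormedSpace 𝕜 E] [NormedAddCommGroup F] [NormedSpace 𝕜 F]
    {f : 𝕜 → E × F} {x : 𝕜} (hf : DifferentiableAt 𝕜 f x) :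
    ‖fderiv 𝕜 f x‖ = max ‖deriv (fun y => (f y).1) x‖ ‖deriv (fun y => (f y).2) x‖ := by
  have h₁ : HasDerivAt (fun y => (f y).1) (deriv f x).1 x :=
    (ContinuousLinearMap.fst 𝕜 E F).hasFDerivAt.comp_hasDerivAt x hf.hasDerivAt
  have h₂ : HasDerivAt (fun y => (f y).2) (deriv f x).2 x :=
    (ContinuousLinearMap.snd 𝕜 E F).hasFDerivAt.comp_hasDerivAt x hf.hasDerivAt
  rw [← norm_deriv_eq_norm_fderiv, h₁.deriv, h₂.deriv, Prod.norm_def]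

lemma isHyperbolic_of_forall_norm_deriv_le {T : Set (ℂ × ℂ)} (hT : IsOpen T)
    (h : ∀ w ∈ T, ∃ V ∈ 𝓝 w, ∃ M₁ M₂ : ℝ, ∀ f : ℂ → ℂ × ℂ, DifferentiableOn ℂ f (ball 0 1) →
      MapsTo f (ball 0 1) T → f 0 ∈ V →
        ‖deriv (fun z => (f z).1) 0‖ ≤ M₁ ∧ ‖deriv (fun z => (f z).2) 0‖ ≤ M₂) :
    IsHyperbolic T := by
  intro w hw
  obtain ⟨V, hV, M₁, M₂, hM⟩ := h w hw
  refine ⟨T ∩ V, inter_subset_left, inter_mem (hT.mem_nhds hw) hV, max (max M₁ M₂) 0 + 1,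
    by positivity, fun f hf hfT hf0 => ?_⟩
  obtain ⟨h₁, h₂⟩ := hM f hf hfT hf0.2
  rw [norm_fderiv_eq_max_norm_deriv (hf.differentiableAt (ball_mem_nhds 0 one_pos))]
  exact (max_le_max h₁ h₂).trans_lt ((le_max_left _ 0).trans_lt (lt_add_one _))

lemma IsOpen.tube {D : Set (ℝ × ℝ)} (hD : IsOpen D) : IsOpen (tube D) :=
  hD.preimage (by fun_prop)

section SetA

variable {α s t : ℝ}

lemma setA_eq (hα : 0 < α) :
    setA α s t = {x | (if 0 ≤ x.1 then t * x.1 ^ α else s * (-x.1) ^ α) < x.2} := by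
  ext ⟨x₁, x₂⟩
  rcases lt_trichotomy x₁ 0 with h | rfl | h
  · simp [setA, h, h.ne, h.not_gt, not_le.2 h]
  · simp [setA, Real.zero_rpow hα.ne']
  · simp [setA, h, h.ne', h.le, h.not_gt]

lemma isOpen_setA (hα : 0 < α) : IsOpen (setA α s t) := by
  have hpow : Continuous fun x : ℝ => x ^ α := Real.continuous_rpow_const hα.le
  have hbdry : Continuous fun x : ℝ => if 0 ≤ x then t * x ^ α else s * (-x) ^ α :=
    Continuous.if_le (by fun_prop) (by fun_prop) continuous_const continuous_id fun x hx => by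
      simp [← hx, Real.zero_rpow hα.ne']
  rw [setA_eq hα]
  exact isOpen_lt (hbdry.comp continuous_fst) continuous_snd

lemma setA_snd_gt (hα : 0 < α) (hs : s < 0) (ht : 0 < t) {x : ℝ × ℝ} (hx : x ∈ setA α s t)
    {K : ℝ} (hK : 0 ≤ K) (hxK : -K ≤ x.1) : s * K ^ α < x.2 := by
  obtain ⟨hpos, hzero, hneg⟩ := hx
  have hsK : s * K ^ α ≤ 0 := mul_nonpos_of_nonpos_of_nonneg hs.le (by positivity)
  rcases lt_trichotomy x.1 0 with h | h | h
  · refine lt_of_le_of_lt ?_ (hneg h)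
    exact mul_le_mul_of_nonpos_left (Real.rpow_le_rpow (by linarith) (by linarith) hα.le) hs.le
  · linarith [hzero h]
  · linarith [hpos h, (by positivity : 0 ≤ t * x.1 ^ α)]

end SetA

section Halves

variable {α s t : ℝ}

lemma isHyperbolic_tube_setA_inter_lt (hα : 0 < α) (hs : s < 0) (ht : 0 < t) (c : ℝ) :
    IsHyperbolic (tube (setA α s t ∩ {x | x.1 < c})) := by
  refine isHyperbolic_of_forall_norm_deriv_le
    ((isOpen_setA hα).inter (isOpen_lt continuous_fst continuous_const)).tube fun w hw => ?_
  have hd : 0 < c - w.1.re := sub_pos.2 hw.2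
  -- by Harnack, `re ∘ f.1` stays above `c - 6 * (c - w.1.re)` on the disk of radius `1/2`
  set K := |c| + 6 * (c - w.1.re)
  have hK : 0 ≤ K := by positivity
  refine ⟨{z : ℂ × ℂ | 2 * w.1.re - c < z.1.re} ∩ {z | z.2.re < w.2.re + 1}, ?_,
    4 * (c - w.1.re), 4 * (w.2.re + 1 - s * K ^ α), ?_⟩
  · refine IsOpen.mem_nhds ?_ ⟨show 2 * w.1.re - c < w.1.re by linarith, lt_add_one w.2.re⟩
    exact (isOpen_lt (by fun_prop) (by fun_prop)).inter (isOpen_lt (by fun_prop) (by fun_prop))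
  rintro f hf hfT ⟨hf₀₁ : 2 * w.1.re - c < (f 0).1.re, hf₀₂ : (f 0).2.re < w.2.re + 1⟩
  have hg : DifferentiableOn ℂ (fun z => -(f z).1) (ball 0 1) := hf.fst.neg
  have hgc : ∀ z ∈ ball (0 : ℂ) 1, -c < (-(f z).1).re := fun z hz => by
    simpa using (hfT hz).2
  have h₁ : ‖deriv (fun z => (f z).1) 0‖ ≤ 4 * (c - w.1.re) := by
    have := norm_deriv_le_of_forall_lt_re hg hgc one_pos
    rw [deriv.fun_neg, norm_neg, neg_re] at this
    linarith
  have hfK : ∀ z ∈ ball (0 : ℂ) (1 / 2), -K ≤ (f z).1.re := fun z hz => by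
    have hz' : ‖z‖ < 1 / 2 := mem_ball_zero_iff.1 hz
    have := re_sub_le_of_forall_lt_re hg hgc (ball_subset_ball (by norm_num) hz)
    have h₀ : -c < -(f 0).1.re := by simpa using hgc 0 (mem_ball_self one_pos)
    rw [sub_zero, neg_re, neg_re] at this
    nlinarith [neg_abs_le c, mul_lt_mul_of_pos_right hz' (by linarith : 0 < c - (f 0).1.re)]
  have hB : ∀ z ∈ ball (0 : ℂ) (1 / 2), s * K ^ α < (f z).2.re := fun z hz =>
    setA_snd_gt hα hs ht (hfT (ball_subset_ball (by norm_num) hz)).1 hK (hfK z hz)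
  have h₂ := norm_deriv_le_of_forall_lt_re (hf.snd.mono (ball_subset_ball (by norm_num))) hB
    (by norm_num : (0 : ℝ) < 1 / 2)
  exact ⟨h₁, by linarith⟩

lemma isHyperbolic_tube_setA_inter_gt (hα : 0 < α) (hs : s < 0) (ht : 0 < t) (c : ℝ) :
    IsHyperbolic (tube (setA α s t ∩ {x | c < x.1})) := by
  refine isHyperbolic_of_forall_norm_deriv_le
    ((isOpen_setA hα).inter (isOpen_lt continuous_const continuous_fst)).tube fun w hw => ?_
  refine ⟨{z : ℂ × ℂ | z.1.re < w.1.re + 1} ∩ {z | z.2.re < w.2.re + 1}, ?_,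
    2 * (w.1.re + 1 - c), 2 * (w.2.re + 1 - s * |c| ^ α), ?_⟩
  · refine IsOpen.mem_nhds ?_ ⟨lt_add_one w.1.re, lt_add_one w.2.re⟩
    exact (isOpen_lt (by fun_prop) (by fun_prop)).inter (isOpen_lt (by fun_prop) (by fun_prop))
  rintro f hf hfT ⟨hf₀₁ : (f 0).1.re < w.1.re + 1, hf₀₂ : (f 0).2.re < w.2.re + 1⟩
  have h₁ := norm_deriv_le_of_forall_lt_re hf.fst (fun z hz => (hfT hz).2) one_pos
  have hB : ∀ z ∈ ball (0 : ℂ) 1, s * |c| ^ α < (f z).2.re := fun z hz =>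
    setA_snd_gt hα hs ht (hfT hz).1 (abs_nonneg c) ((neg_abs_le c).trans (hfT hz).2.le)
  have h₂ := norm_deriv_le_of_forall_lt_re hf.snd hB one_pos
  exact ⟨by linarith, by linarith⟩

end Halves

theorem tubeA_halves_hyperbolic_general (α s t : ℝ) (hα : 0 < α)
    (hs : s < 0) (ht : 0 < t) (c : ℝ) :
    IsHyperbolic (tube (setA α s t ∩ {x : ℝ × ℝ | x.1 < c})) ∧
    IsHyperbolic (tube (setA α s t ∩ {x : ℝ × ℝ | c < x.1})) :=
  ⟨isHyperbolic_tube_setA_inter_lt hα hs ht c, isHyperbolic_tube_setA_inter_gt hα hs ht c⟩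

/-- The tube domains over the two halves `A_{α,s,t} ∩ {x₁ < c}` and
`A_{α,s,t} ∩ {x₁ > c}` are Kobayashi-hyperbolic. -/
theorem tubeA_halves_hyperbolic (α s t : ℝ) (hα : 0 < α) (hα1 : α ≠ 1)
    (hs : s < 0) (ht : 0 < t) (c : ℝ) :
    IsHyperbolic (tube (setA α s t ∩ {x : ℝ × ℝ | x.1 < c})) ∧
    IsHyperbolic (tube (setA α s t ∩ {x : ℝ × ℝ | c < x.1})) :=
  tubeA_halves_hyperbolic_general α s t hα hs ht c
end

section
/- Let s>0, t>0, and let c ∈ ℝ. Set D₋ = B_{s,t} ∩ {x₁ < c} and D₊ = B_{s,t} ∩ {x₁ > c}. Then each of the tube domains T_{D₋} and T_{D₊} (when the base is nonempty) satisfies: for every point w there exist a neighborhood U of w and a constant M>0 such that every holomorphic map f: Δ → T_{D₋} (respectively T_{D₊}) with f(0) ∈ U satisfies ‖f'(0)‖ < M; i.e., T_{D₋} and T_{D₊} are Kobayashi-hyperbolic. -/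
open Complex Metric Set Filter Topology

/-- The base domain `B_{s,t}`. -/
def setB (s t : ℝ) : Set (ℝ × ℝ) :=
  {x | (0 < x.1 → x.1 * Real.log (t * x.1) < x.2) ∧ (x.1 = 0 → 0 < x.2) ∧
       (x.1 < 0 → x.1 * Real.log (s * (-x.1)) < x.2)}

/-!
A holomorphic disc `f = (f₁, f₂)` in the tube has `Re f₁` confined to a half-line, so by
Borel–Carathéodory `f₁` is bounded on the disc of radius `1/2` in terms of `f₁ 0`. There
`Re f₁` ranges over a bounded interval, above which `B_{s,t}` lies over the graph of a continuous
function; hence `Re f₂` is bounded below, and Borel–Carathéodory bounds `f₂` on the disc of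
radius `1/4`. Cauchy's estimate then bounds `f' 0` uniformly for `f 0` in a bounded set.
-/

namespace Complex

variable {g : ℂ → ℂ} {R c : ℝ} {z : ℂ}

theorem norm_le_five_mul_of_re_pos (hR : 0 < R) (hg : DifferentiableOn ℂ g (ball 0 R))
    (hre : ∀ w ∈ ball (0 : ℂ) R, 0 < (g w).re) (hz : ‖z‖ ≤ R / 2) :
    ‖g z‖ ≤ 5 * ‖g 0‖ := by
  have hg0 : 0 < ‖g 0‖ := (hre 0 (mem_ball_self hR)).trans_le (re_le_norm _)
  have hzR : ‖z‖ < R := by linarith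
  have hBC := borelCaratheodory hg0 hg.neg (fun w hw => by
      have := hre w hw; simp only [mem_ofPred_eq, Pi.neg_apply, neg_re]; linarith)
    hR (mem_ball_zero_iff.2 hzR)
  simp only [Pi.neg_apply, norm_neg] at hBC
  calc ‖g z‖ ≤ ‖g 0‖ * (R + 3 * ‖z‖) / (R - ‖z‖) := by
        convert hBC using 1; field_simp; ring
    _ ≤ 5 * ‖g 0‖ := by
        rw [div_le_iff₀ (by linarith)]; nlinarith [norm_nonneg z]

theorem norm_le_of_lt_re (hR : 0 < R) (hg : DifferentiableOn ℂ g (ball 0 R))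
    (hre : ∀ w ∈ ball (0 : ℂ) R, c < (g w).re) (hz : ‖z‖ ≤ R / 2) :
    ‖g z‖ ≤ 5 * ‖g 0‖ + 6 * |c| := by
  have h := norm_le_five_mul_of_re_pos (g := fun w => g w - c) hR (hg.sub_const _)
    (fun w hw => by simpa using hre w hw) hz
  calc ‖g z‖ ≤ ‖g z - c‖ + ‖(c : ℂ)‖ := norm_le_norm_sub_add _ _
    _ ≤ 5 * (‖g 0‖ + ‖(c : ℂ)‖) + ‖(c : ℂ)‖ := by
        gcongr; exact h.trans (by gcongr; exact norm_sub_le _ _)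
    _ = 5 * ‖g 0‖ + 6 * |c| := by rw [norm_real, Real.norm_eq_abs]; ring

theorem norm_le_of_re_lt (hR : 0 < R) (hg : DifferentiableOn ℂ g (ball 0 R))
    (hre : ∀ w ∈ ball (0 : ℂ) R, (g w).re < c) (hz : ‖z‖ ≤ R / 2) :
    ‖g z‖ ≤ 5 * ‖g 0‖ + 6 * |c| := by
  simpa using norm_le_of_lt_re (g := -g) (c := -c) hR hg.neg
    (fun w hw => by simpa using hre w hw) hz

end Complex

theorem isHyperbolic_of_isOpen_of_norm_fderiv_le {T : Set (ℂ × ℂ)} (hT : IsOpen T)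
    (h : ∀ r, ∃ M, ∀ f : ℂ → ℂ × ℂ, DifferentiableOn ℂ f (ball (0 : ℂ) 1) →
      MapsTo f (ball (0 : ℂ) 1) T → ‖f 0‖ ≤ r → ‖fderiv ℂ f 0‖ ≤ M) :
    IsHyperbolic T := by
  intro w hw
  obtain ⟨M, hM⟩ := h (‖w‖ + 1)
  refine ⟨ball w 1 ∩ T, inter_subset_right, inter_mem (ball_mem_nhds w one_pos)
    (hT.mem_nhds hw), max M 0 + 1, by positivity, fun f hf hfT hf0 => ?_⟩
  have hf0w : ‖f 0‖ ≤ ‖w‖ + 1 := by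
    linarith [mem_ball_iff_norm.1 hf0.1, norm_le_norm_sub_add (f 0) w]
  linarith [hM f hf hfT hf0w, le_max_left M 0]

section Tube

variable {D : Set (ℝ × ℝ)} {c : ℝ}

theorem isOpen_tube (hD : IsOpen D) : IsOpen (tube D) :=
  hD.preimage (by fun_prop)

theorem norm_fst_le_of_mapsTo_tube (hD : (∀ x ∈ D, x.1 < c) ∨ ∀ x ∈ D, c < x.1)
    {f : ℂ → ℂ × ℂ} (hf : DifferentiableOn ℂ f (ball 0 1))
    (hfD : MapsTo f (ball 0 1) (tube D)) {z : ℂ} (hz : ‖z‖ ≤ 1 / 2) :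
    ‖(f z).1‖ ≤ 5 * ‖(f 0).1‖ + 6 * |c| := by
  rcases hD with hD | hD
  · exact norm_le_of_re_lt one_pos hf.fst (fun w hw => hD _ (hfD hw)) hz
  · exact norm_le_of_lt_re one_pos hf.fst (fun w hw => hD _ (hfD hw)) hz

theorem norm_fderiv_le_of_mapsTo_tube (hD : (∀ x ∈ D, x.1 < c) ∨ ∀ x ∈ D, c < x.1)
    {r m : ℝ} (hm : ∀ x ∈ D, |x.1| ≤ 5 * r + 6 * |c| → m < x.2)
    {f : ℂ → ℂ × ℂ} (hf : DifferentiableOn ℂ f (ball 0 1))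
    (hfD : MapsTo f (ball 0 1) (tube D)) (hf0 : ‖f 0‖ ≤ r) :
    ‖fderiv ℂ f 0‖ ≤ 4 * (10 * r + 6 * |c| + 6 * |m|) := by
  have hsub : ball (0 : ℂ) (1 / 2) ⊆ ball 0 1 := ball_subset_ball (by norm_num)
  have hf₁ : ∀ z : ℂ, ‖z‖ ≤ 1 / 2 → ‖(f z).1‖ ≤ 5 * r + 6 * |c| := fun z hz =>
    (norm_fst_le_of_mapsTo_tube hD hf hfD hz).trans
      (by gcongr; exact (norm_fst_le _).trans hf0)
  have hf₂re : ∀ w ∈ ball (0 : ℂ) (1 / 2), m < (f w).2.re := fun w hw =>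
    hm _ (hfD (hsub hw)) ((abs_re_le_norm _).trans (hf₁ w (mem_ball_zero_iff.1 hw).le))
  have hf₂ : ∀ z : ℂ, ‖z‖ ≤ 1 / 4 → ‖(f z).2‖ ≤ 5 * r + 6 * |m| := fun z hz =>
    (norm_le_of_lt_re (g := fun w => (f w).2) (by norm_num) (hf.mono hsub).snd hf₂re
      (by linarith)).trans (by gcongr; exact (norm_snd_le _).trans hf0)
  have hsphere : ∀ z ∈ sphere (0 : ℂ) (1 / 4), ‖f z‖ ≤ 10 * r + 6 * |c| + 6 * |m| := by
    intro z hz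
    have hz' : ‖z‖ = 1 / 4 := mem_sphere_zero_iff_norm.1 hz
    have hr : 0 ≤ r := (norm_nonneg _).trans hf0
    refine max_le ((hf₁ z (by linarith)).trans ?_) ((hf₂ z hz'.le).trans ?_) <;>
      linarith [abs_nonneg c, abs_nonneg m]
  have hcauchy := norm_deriv_le_of_forall_mem_sphere_norm_le (by norm_num)
    (hf.diffContOnCl_ball (closedBall_subset_ball (by norm_num))) hsphere
  rw [norm_deriv_eq_norm_fderiv] at hcauchy
  linarith

theorem isHyperbolic_tube (hDo : IsOpen D) (hD : (∀ x ∈ D, x.1 < c) ∨ ∀ x ∈ D, c < x.1)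
    (hbdd : ∀ ρ, ∃ m, ∀ x ∈ D, |x.1| ≤ ρ → m < x.2) : IsHyperbolic (tube D) := by
  refine isHyperbolic_of_isOpen_of_norm_fderiv_le (isOpen_tube hDo) fun r => ?_
  obtain ⟨m, hm⟩ := hbdd (5 * r + 6 * |c|)
  exact ⟨_, fun f hf hfD hf0 => norm_fderiv_le_of_mapsTo_tube hD hm hf hfD hf0⟩

end Tube

/-- `B_{s,t}` is the strict epigraph of this function. Since `Real.log x = Real.log |x|`, the
formula agrees with `x log (t x)` for `x > 0` and with `x log (s (-x))` for `x < 0`. -/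
noncomputable def bProfile (s t x : ℝ) : ℝ :=
  x * Real.log x + max x 0 * Real.log t + min x 0 * Real.log s

theorem continuous_bProfile (s t : ℝ) : Continuous (bProfile s t) := by
  unfold bProfile
  fun_prop

section SetB

variable {s t : ℝ}

theorem setB_eq (hs : s ≠ 0) (ht : t ≠ 0) : setB s t = {x | bProfile s t x.1 < x.2} := by
  ext ⟨x, y⟩
  simp only [setB, bProfile, mem_ofPred_eq]
  rcases lt_trichotomy x 0 with hx | rfl | hx
  · rw [Real.log_mul hs (neg_ne_zero.2 hx.ne), Real.log_neg_eq_log, max_eq_right hx.le,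
      min_eq_left hx.le]
    simp only [lt_asymm hx, hx.ne, hx, false_imp_iff, true_imp_iff, true_and]
    constructor <;> intro h <;> linarith
  · simp
  · rw [Real.log_mul ht hx.ne', max_eq_left hx.le, min_eq_right hx.le]
    simp only [lt_asymm hx, hx.ne', hx, false_imp_iff, true_imp_iff, and_true]
    constructor <;> intro h <;> linarith

theorem isOpen_setB (hs : s ≠ 0) (ht : t ≠ 0) : IsOpen (setB s t) := by
  rw [setB_eq hs ht]
  exact isOpen_lt ((continuous_bProfile s t).comp continuous_fst) continuous_snd

theorem exists_lt_snd_of_mem_setB (hs : s ≠ 0) (ht : t ≠ 0) (ρ : ℝ) :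
    ∃ m, ∀ x ∈ setB s t, |x.1| ≤ ρ → m < x.2 := by
  obtain ⟨m, hm⟩ := (isCompact_Icc (a := -ρ) (b := ρ)).bddBelow_image
    (continuous_bProfile s t).continuousOn
  refine ⟨m, fun x hx hxρ => ?_⟩
  rw [setB_eq hs ht] at hx
  exact (hm (mem_image_of_mem _ (abs_le.1 hxρ))).trans_lt hx

end SetB

/-- The tube domains over the two halves `B_{s,t} ∩ {x₁ < c}` and
`B_{s,t} ∩ {x₁ > c}` are Kobayashi-hyperbolic. -/
theorem tubeB_halves_hyperbolic (s t : ℝ) (hs : 0 < s) (ht : 0 < t) (c : ℝ) :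
    IsHyperbolic (tube (setB s t ∩ {x : ℝ × ℝ | x.1 < c})) ∧
    IsHyperbolic (tube (setB s t ∩ {x : ℝ × ℝ | c < x.1})) := by
  have hB := isOpen_setB hs.ne' ht.ne'
  have hbdd (H : Set (ℝ × ℝ)) : ∀ ρ, ∃ m, ∀ x ∈ setB s t ∩ H, |x.1| ≤ ρ → m < x.2 :=
    fun ρ => (exists_lt_snd_of_mem_setB hs.ne' ht.ne' ρ).imp fun _ hm x hx => hm x hx.1
  exact ⟨isHyperbolic_tube (hB.inter (isOpen_lt continuous_fst continuous_const))
      (.inl fun x hx => hx.2) (hbdd _),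
    isHyperbolic_tube (hB.inter (isOpen_lt continuous_const continuous_fst))
      (.inr fun x hx => hx.2) (hbdd _)⟩
end

section
/- Let α>0, t>0 and e^{−2πα}·t < s < t, and let c ∈ ℝ. Then every connected component of the open set C_{α,s,t} ∩ {(x₁,x₂) : x₁ < c} is a bounded subset of ℝ², and likewise every connected component of C_{α,s,t} ∩ {(x₁,x₂) : x₁ > c} is bounded. -/
/-!
In logarithmic coordinates `w = log z`, `C_{α,s,t}` is the image under `exp` of the oblique strip
`log s < Re w - α Im w < log t`, and `e^{-2πα} t < s` makes `exp` injective on this strip, so it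
has a continuous inverse there: a continuous choice of the polar angle `φ` on `C_{α,s,t}`.
For arbitrarily large `θ ≡ 0` (resp. `θ ≡ π`) mod `2π`, the points of `C_{α,s,t}` at angle `θ` have
`x₁ > c` (resp. `x₁ < c`), since their radius exceeds `s e^{αθ}`. Choosing such a `θ` above the
angle of one point of a connected component, the intermediate value theorem keeps the angle below
`θ` on the whole component, so the radius stays below `t e^{αθ}`.
-/

open Complex Metric Set Filter Topology

def logStrip (α a b : ℝ) : Set ℂ :=
  {w | a < w.re - α * w.im ∧ w.re - α * w.im < b}

section logStrip

variable {α a b : ℝ}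

theorem isOpen_logStrip : IsOpen (logStrip α a b) := by
  have hf : Continuous fun w : ℂ => w.re - α * w.im := by fun_prop
  exact (isOpen_lt continuous_const hf).inter (isOpen_lt hf continuous_const)

theorem injOn_exp_logStrip (hab : b - a < 2 * Real.pi * α) :
    InjOn Complex.exp (logStrip α a b) := by
  rintro w ⟨hw₁, hw₂⟩ w' ⟨hw₁', hw₂'⟩ hexp
  obtain ⟨k, hk⟩ := Complex.exp_eq_exp_iff_exists_int.mp hexp
  have hre : w.re = w'.re := by simpa using congrArg Complex.re hk
  have him : w.im = w'.im + k * (2 * Real.pi) := by simpa using congrArg Complex.im hk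
  suffices k = 0 by simpa [this] using hk
  have hshift : |2 * Real.pi * (α * k)| < 2 * Real.pi * α := by
    have hdiff : 2 * Real.pi * (α * k) = (w'.re - α * w'.im) - (w.re - α * w.im) := by
      rw [hre, him]; ring
    rw [abs_lt]
    constructor <;> linarith
  rw [abs_mul, abs_of_pos Real.two_pi_pos, mul_lt_mul_iff_right₀ Real.two_pi_pos,
    abs_mul] at hshift
  by_contra hk0
  have : (1 : ℝ) ≤ |(k : ℝ)| := by exact_mod_cast Int.one_le_abs hk0
  nlinarith [le_abs_self α, abs_nonneg α]

noncomputable def expLogStrip (hab : b - a < 2 * Real.pi * α) :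
    OpenPartialHomeomorph ℂ ℂ :=
  .ofContinuousOpen ((injOn_exp_logStrip hab).toPartialEquiv _ _)
    Complex.continuous_exp.continuousOn Complex.isOpenMap_exp isOpen_logStrip

theorem isBounded_of_isPreconnected_subset_exp_image_logStrip (hab : b - a < 2 * Real.pi * α)
    {K : Set ℂ} (hK : IsPreconnected K) (hKS : K ⊆ Complex.exp '' logStrip α a b)
    (hbarrier : ∀ φ, ∃ θ > φ, ∀ w ∈ logStrip α a b, w.im = θ → Complex.exp w ∉ K) :
    Bornology.IsBounded K := by
  rcases K.eq_empty_or_nonempty with rfl | ⟨z₀, hz₀⟩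
  · exact Bornology.isBounded_empty
  set e := expLogStrip hab
  have he_symm_mem : ∀ z ∈ K, e.symm z ∈ logStrip α a b := fun z hz => e.map_target (hKS hz)
  have he_symm_exp : ∀ z ∈ K, Complex.exp (e.symm z) = z := fun z hz => e.right_inv (hKS hz)
  -- the strip is nonempty, so `0 < b - a < 2πα`
  have hα : 0 < α := by
    obtain ⟨h₁, h₂⟩ := he_symm_mem z₀ hz₀
    nlinarith [Real.pi_pos]
  obtain ⟨θ, hθ, hθK⟩ := hbarrier (e.symm z₀).im
  have hangle : ∀ z ∈ K, (e.symm z).im < θ := by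
    intro z hz
    by_contra! h
    obtain ⟨z', hz', hz'θ⟩ := hK.intermediate_value hz₀ hz
      (continuous_im.comp_continuousOn (e.continuousOn_symm.mono hKS)) ⟨hθ.le, h⟩
    exact hθK _ (he_symm_mem z' hz') hz'θ (by rwa [he_symm_exp z' hz'])
  refine isBounded_iff_forall_norm_le.2 ⟨Real.exp (b + α * θ), fun z hz => ?_⟩
  rw [← he_symm_exp z hz, Complex.norm_exp]
  gcongr
  nlinarith [(he_symm_mem z hz).2, hangle z hz]

end logStrip

theorem mul_exp_lt_exp_iff {s α φ u : ℝ} (hs : 0 < s) :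
    s * Real.exp (α * φ) < Real.exp u ↔ Real.log s < u - α * φ := by
  rw [← Real.exp_log hs, ← Real.exp_add, Real.exp_lt_exp, Real.log_exp]
  constructor <;> intro h <;> linarith

theorem exp_lt_mul_exp_iff {t α φ u : ℝ} (ht : 0 < t) :
    Real.exp u < t * Real.exp (α * φ) ↔ u - α * φ < Real.log t := by
  rw [← Real.exp_log ht, ← Real.exp_add, Real.exp_lt_exp, Real.log_exp]
  constructor <;> intro h <;> linarith

theorem equivRealProd_mem_setC_iff {α s t : ℝ} (hs : 0 < s) (ht : 0 < t) {z : ℂ} :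
    equivRealProd z ∈ setC α s t ↔ z ∈ Complex.exp '' logStrip α (Real.log s) (Real.log t) := by
  constructor
  · rintro ⟨r, φ, hsr, hrt, hz⟩
    have hr : 0 < r := (by positivity : 0 < s * Real.exp (α * φ)).trans hsr
    rw [← Real.exp_log hr] at hsr hrt
    refine ⟨⟨Real.log r, φ⟩, ⟨(mul_exp_lt_exp_iff hs).1 hsr, (exp_lt_mul_exp_iff ht).1 hrt⟩, ?_⟩
    apply equivRealProd.injective
    simp [hz, Complex.exp_re, Complex.exp_im, Real.exp_log hr]
  · rintro ⟨w, ⟨hsw, hwt⟩, rfl⟩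
    exact ⟨Real.exp w.re, w.im, (mul_exp_lt_exp_iff hs).2 hsw, (exp_lt_mul_exp_iff ht).2 hwt,
      by simp [Complex.exp_re, Complex.exp_im]⟩

theorem isBounded_connectedComponentIn_setC_inter {α s t : ℝ} (ht : 0 < t)
    (hst : Real.exp (-(2 * Real.pi * α)) * t < s) {Q : Set (ℝ × ℝ)}
    (hQ : ∀ φ, ∃ θ > φ, ∀ r > s * Real.exp (α * θ), (r * Real.cos θ, r * Real.sin θ) ∉ Q)
    (x : ℝ × ℝ) : Bornology.IsBounded (connectedComponentIn (setC α s t ∩ Q) x) := by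
  have hs : 0 < s := (mul_pos (Real.exp_pos _) ht).trans hst
  have hab : Real.log t - Real.log s < 2 * Real.pi * α := by
    have := Real.log_lt_log (by positivity) hst
    rw [Real.log_mul (Real.exp_ne_zero _) ht.ne', Real.log_exp] at this
    linarith
  set K := connectedComponentIn (setC α s t ∩ Q) x
  set e := equivRealProdCLM
  have hKS : e.symm '' K ⊆ Complex.exp '' logStrip α (Real.log s) (Real.log t) := by
    rintro _ ⟨p, hp, rfl⟩
    rw [← equivRealProd_mem_setC_iff hs ht]
    simpa [e] using (connectedComponentIn_subset _ _ hp).1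
  have hbarrier : ∀ φ, ∃ θ > φ, ∀ w ∈ logStrip α (Real.log s) (Real.log t), w.im = θ →
      Complex.exp w ∉ e.symm '' K := by
    intro φ
    obtain ⟨θ, hθ, hθQ⟩ := hQ φ
    refine ⟨θ, hθ, ?_⟩
    rintro w ⟨hsw, -⟩ rfl ⟨p, hp, hpw⟩
    have hpQ := (connectedComponentIn_subset _ _ hp).2
    rw [← e.apply_symm_apply p, hpw] at hpQ
    exact hθQ (Real.exp w.re) ((mul_exp_lt_exp_iff hs).2 hsw)
      (by simpa [e, Complex.exp_re, Complex.exp_im] using hpQ)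
  have hK' := isBounded_of_isPreconnected_subset_exp_image_logStrip hab
    (isPreconnected_connectedComponentIn.image _ e.symm.continuous.continuousOn) hKS hbarrier
  simpa using e.lipschitz.isBounded_image hK'

theorem exists_gt_cos_eq_le_mul_exp {α s : ℝ} (hα : 0 < α) (hs : 0 < s) (ψ φ c : ℝ) :
    ∃ θ > φ, Real.cos θ = Real.cos ψ ∧ c ≤ s * Real.exp (α * θ) := by
  have hθ : Tendsto (fun k : ℕ => ψ + k * (2 * Real.pi)) atTop atTop :=
    tendsto_atTop_add_const_left _ _
      (tendsto_natCast_atTop_atTop.atTop_mul_const Real.two_pi_pos)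
  have hr : Tendsto (fun θ => s * Real.exp (α * θ)) atTop atTop :=
    (Real.tendsto_exp_atTop.comp (tendsto_id.const_mul_atTop hα)).const_mul_atTop hs
  obtain ⟨k, hk, hkc⟩ :=
    ((hθ.eventually_gt_atTop φ).and ((hr.comp hθ).eventually_ge_atTop c)).exists
  exact ⟨_, hk, Real.cos_add_nat_mul_two_pi ψ k, hkc⟩

theorem setC_halves_components_bounded_general (α s t : ℝ) (hα : 0 < α) (ht : 0 < t)
    (hst : Real.exp (-(2 * Real.pi * α)) * t < s) (c : ℝ) :
    (∀ x ∈ setC α s t ∩ {x : ℝ × ℝ | x.1 < c},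
      Bornology.IsBounded
        (connectedComponentIn (setC α s t ∩ {x : ℝ × ℝ | x.1 < c}) x)) ∧
    (∀ x ∈ setC α s t ∩ {x : ℝ × ℝ | c < x.1},
      Bornology.IsBounded
        (connectedComponentIn (setC α s t ∩ {x : ℝ × ℝ | c < x.1}) x)) := by
  have hs : 0 < s := (mul_pos (Real.exp_pos _) ht).trans hst
  refine ⟨fun x _ => isBounded_connectedComponentIn_setC_inter ht hst (fun φ => ?_) x,
    fun x _ => isBounded_connectedComponentIn_setC_inter ht hst (fun φ => ?_) x⟩
  · obtain ⟨θ, hθ, hcos, hc⟩ := exists_gt_cos_eq_le_mul_exp hα hs 0 φ c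
    refine ⟨θ, hθ, fun r hr hrc => ?_⟩
    simp only [mem_ofPred_eq, hcos, Real.cos_zero, mul_one] at hrc
    linarith
  · obtain ⟨θ, hθ, hcos, hc⟩ := exists_gt_cos_eq_le_mul_exp hα hs Real.pi φ (-c)
    refine ⟨θ, hθ, fun r hr hcr => ?_⟩
    simp only [mem_ofPred_eq, hcos, Real.cos_pi, mul_neg_one] at hcr
    linarith

/-- Every connected component of `C_{α,s,t} ∩ {x₁ < c}`, and of `C_{α,s,t} ∩ {x₁ > c}`,
is a bounded subset of `ℝ²`. -/
theorem setC_halves_components_bounded (α s t : ℝ) (hα : 0 < α) (ht : 0 < t)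
    (hst : Real.exp (-(2 * Real.pi * α)) * t < s) (hst' : s < t) (c : ℝ) :
    (∀ x ∈ setC α s t ∩ {x : ℝ × ℝ | x.1 < c},
      Bornology.IsBounded
        (connectedComponentIn (setC α s t ∩ {x : ℝ × ℝ | x.1 < c}) x)) ∧
    (∀ x ∈ setC α s t ∩ {x : ℝ × ℝ | c < x.1},
      Bornology.IsBounded
        (connectedComponentIn (setC α s t ∩ {x : ℝ × ℝ | c < x.1}) x)) :=
  setC_halves_components_bounded_general α s t hα ht hst c
end
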